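/- arXiv:1404.1258 — 4 statements merged into one kernel-verified Lean document; each statement's English description precedes it below -/
import Mathlib

section
/- Let p ≥ 7 be a prime and define g_λ = (6λ)! / ((2λ)! (3λ)! 2^{3λ} 3^{2λ}). Then for λ = p^r with r ≥ 0, the p-adic valuation of g_λ equals (p^r − 1)/(p − 1), which equals v_p(λ!). -/
/-! Legendre: for `k < p` the `p`-adic valuation of `(k p^r)!` is `k (1 + p + ⋯ + p^(r-1))`, since
multiplying by `p` adds `k p^r` to it and `k!` is prime to `p`. For `p > 3` the powers of `2` and `3`
in the denominator of `g_λ` are `p`-adic units, so at `λ = p^r` its valuation is `(6 - 2 - 3)` times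
the geometric sum, which is both `(p^r - 1)/(p - 1)` and `v_p((p^r)!)`. -/

open Finset Nat

lemma padicValNat_factorial_mul_prime_pow {p k : ℕ} [hp : Fact p.Prime] (hkp : k < p) (r : ℕ) :
    padicValNat p (k * p ^ r)! = k * ∑ i ∈ range r, p ^ i := by
  induction r with
  | zero =>
    simpa using padicValNat.eq_zero_of_not_dvd fun h => (hp.out.dvd_factorial.mp h).not_gt hkp
  | succ r ih =>
    rw [show k * p ^ (r + 1) = p * (k * p ^ r) by ring, padicValNat_factorial_mul, ih,
      sum_range_succ]
    ring

lemma padicValRat_natCast_eq_zero_of_lt {p n : ℕ} (hn : n < p) : padicValRat p (n : ℚ) = 0 := by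
  rcases n.eq_zero_or_pos with rfl | hn0
  · simp
  · simp [padicValNat.eq_zero_of_not_dvd (Nat.not_dvd_of_pos_of_lt hn0 hn)]

lemma padicValRat_factorial_ratio {p : ℕ} [Fact p.Prime] (hp3 : 3 < p) (n : ℕ) :
    padicValRat p (((6 * n)! : ℚ) / (((2 * n)! : ℚ) * ((3 * n)! : ℚ) * 2 ^ (3 * n) * 3 ^ (2 * n))) =
      padicValNat p (6 * n)! - padicValNat p (2 * n)! - padicValNat p (3 * n)! := by
  have h2 : padicValRat p (2 : ℚ) = 0 :=
    mod_cast padicValRat_natCast_eq_zero_of_lt (n := 2) (by omega)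
  have h3 : padicValRat p (3 : ℚ) = 0 :=
    mod_cast padicValRat_natCast_eq_zero_of_lt (n := 3) (by omega)
  have hfac (m : ℕ) : ((m ! : ℕ) : ℚ) ≠ 0 := cast_ne_zero.mpr m.factorial_ne_zero
  rw [padicValRat.div (hfac _) (by positivity), padicValRat.mul (by positivity) (by positivity),
    padicValRat.mul (by positivity) (by positivity), padicValRat.mul (hfac _) (hfac _),
    padicValRat.pow (2 : ℚ), padicValRat.pow (3 : ℚ), h2, h3,
    padicValRat.of_nat, padicValRat.of_nat, padicValRat.of_nat]
  ring

lemma Int.geom_sum_eq_ediv {x : ℤ} (hx : x ≠ 1) (n : ℕ) :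
    ∑ i ∈ Finset.range n, x ^ i = (x ^ n - 1) / (x - 1) := by
  rw [← geom_sum_mul, Int.mul_ediv_cancel _ (sub_ne_zero.mpr hx)]

theorem stmt_8 (p : ℕ) (hp : p.Prime) (hp7 : 7 ≤ p) (r : ℕ) :
    padicValRat p (((Nat.factorial (6 * p ^ r) : ℚ) /
        ((Nat.factorial (2 * p ^ r) : ℚ) * (Nat.factorial (3 * p ^ r) : ℚ) *
          2 ^ (3 * p ^ r) * 3 ^ (2 * p ^ r)))) =
      ((p : ℤ) ^ r - 1) / ((p : ℤ) - 1) ∧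
    padicValRat p (((Nat.factorial (6 * p ^ r) : ℚ) /
        ((Nat.factorial (2 * p ^ r) : ℚ) * (Nat.factorial (3 * p ^ r) : ℚ) *
          2 ^ (3 * p ^ r) * 3 ^ (2 * p ^ r)))) =
      (padicValNat p (Nat.factorial (p ^ r)) : ℤ) := by
  have : Fact p.Prime := ⟨hp⟩
  have hval : padicValRat p (((6 * p ^ r)! : ℚ) /
      (((2 * p ^ r)! : ℚ) * ((3 * p ^ r)! : ℚ) * 2 ^ (3 * p ^ r) * 3 ^ (2 * p ^ r))) =
      ∑ i ∈ range r, (p : ℤ) ^ i := by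
    rw [padicValRat_factorial_ratio (by omega), padicValNat_factorial_mul_prime_pow (by omega),
      padicValNat_factorial_mul_prime_pow (by omega), padicValNat_factorial_mul_prime_pow (by omega)]
    push_cast
    ring
  have hone : padicValNat p (p ^ r)! = ∑ i ∈ range r, p ^ i := by
    simpa using padicValNat_factorial_mul_prime_pow (k := 1) hp.one_lt r
  refine ⟨?_, ?_⟩
  · rw [hval, Int.geom_sum_eq_ediv (by omega)]
  · rw [hval, hone]
    norm_cast
end

section
/- Let p be a prime and suppose for each λ ≥ 0 we define g_λ = (6λ)! / ((2λ)! (3λ)! 2^{3λ} 3^{2λ}), with p ≥ 5 (so p does not divide 6). Then v_p(g_λ) ≥ v_p(λ!) for all λ ≥ 0; in particular v_p(g_λ) → ∞ as λ → ∞. -/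
/-!
The `p`-adic valuation of `g λ` is `v_p((6λ)!) - v_p((2λ)!) - v_p((3λ)!)`, since `p ∤ 6`.
The multinomial coefficient `(6λ)! / ((2λ)! (3λ)! λ!)` is an integer, so this difference is at
least `v_p(λ!)`, which is unbounded because `v_p((pn)!) = v_p(n!) + n`.
-/

open Filter Nat

section

variable {p : ℕ} [Fact p.Prime]

theorem Nat.factorial_mul_factorial_mul_factorial_dvd_factorial_add (a b c : ℕ) :
    a ! * b ! * c ! ∣ (a + b + c)! :=
  (mul_dvd_mul_right (factorial_mul_factorial_dvd_factorial_add a b) _).trans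
    (factorial_mul_factorial_dvd_factorial_add _ _)

theorem padicValNat_le_of_dvd {a b : ℕ} (hb : b ≠ 0) (h : a ∣ b) :
    padicValNat p a ≤ padicValNat p b :=
  (padicValNat_dvd_iff_le hb).mp (pow_padicValNat_dvd.trans h)

theorem padicValNat_factorials_le_factorial_add (a b c : ℕ) :
    padicValNat p a ! + padicValNat p b ! + padicValNat p c ! ≤ padicValNat p (a + b + c)! := by
  have h := padicValNat_le_of_dvd (p := p) (factorial_ne_zero _)
    (factorial_mul_factorial_mul_factorial_dvd_factorial_add a b c)
  rwa [padicValNat.mul (by positivity) (factorial_ne_zero c),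
    padicValNat.mul (factorial_ne_zero a) (factorial_ne_zero b)] at h

theorem tendsto_padicValNat_factorial_atTop :
    Tendsto (fun n => padicValNat p n !) atTop atTop := by
  refine tendsto_atTop_atTop_of_monotone
    (fun m n hmn => padicValNat_le_of_dvd (factorial_ne_zero n) (factorial_dvd_factorial hmn))
    fun n => ⟨p * n, ?_⟩
  rw [padicValNat_factorial_mul]
  omega

theorem padicValRat_two_pow_mul_three_pow (hp2 : p ≠ 2) (hp3 : p ≠ 3) (m n : ℕ) :
    padicValRat p ((2 : ℚ) ^ m * 3 ^ n) = 0 := by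
  have : Fact (Nat.Prime 2) := ⟨prime_two⟩
  have : Fact (Nat.Prime 3) := ⟨prime_three⟩
  have h2 : padicValRat p (2 : ℚ) = 0 := by
    simpa [padicValNat_primes hp2] using padicValRat.of_nat (p := p) (n := 2)
  have h3 : padicValRat p (3 : ℚ) = 0 := by
    simpa [padicValNat_primes hp3] using padicValRat.of_nat (p := p) (n := 3)
  rw [padicValRat.mul (by positivity) (by positivity), padicValRat.pow, padicValRat.pow, h2, h3]
  simp

theorem padicValRat_factorial_div_factorials_mul_two_pow_mul_three_pow
    (hp2 : p ≠ 2) (hp3 : p ≠ 3) (a b c m n : ℕ) :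
    padicValRat p ((a ! : ℚ) / ((b ! : ℚ) * (c ! : ℚ) * 2 ^ m * 3 ^ n)) =
      (padicValNat p a ! : ℤ) - padicValNat p b ! - padicValNat p c ! := by
  rw [mul_assoc _ ((2 : ℚ) ^ m), padicValRat.div (by positivity) (by positivity),
    padicValRat.mul (by positivity) (by positivity), padicValRat_two_pow_mul_three_pow hp2 hp3,
    padicValRat.mul (by positivity) (by positivity)]
  simp only [padicValRat.of_nat]
  ring

end

open Filter in
theorem stmt_9 (p : ℕ) (hp : p.Prime) (hp5 : 5 ≤ p)
    (g : ℕ → ℚ)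
    (hg : ∀ lam, g lam = (Nat.factorial (6 * lam) : ℚ) /
        ((Nat.factorial (2 * lam) : ℚ) * (Nat.factorial (3 * lam) : ℚ) *
          2 ^ (3 * lam) * 3 ^ (2 * lam))) :
    (∀ lam, (padicValNat p (Nat.factorial lam) : ℤ) ≤ padicValRat p (g lam)) ∧
      Tendsto (fun lam => padicValRat p (g lam)) atTop atTop := by
  have : Fact p.Prime := ⟨hp⟩
  have hval_ge : ∀ lam, (padicValNat p lam ! : ℤ) ≤ padicValRat p (g lam) := fun lam => by
    rw [hg, padicValRat_factorial_div_factorials_mul_two_pow_mul_three_pow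
      (by omega) (by omega)]
    have := padicValNat_factorials_le_factorial_add (p := p) (2 * lam) (3 * lam) lam
    rw [show 2 * lam + 3 * lam + lam = 6 * lam by ring] at this
    omega
  exact ⟨hval_ge, tendsto_atTop_mono hval_ge
    (tendsto_natCast_atTop_atTop.comp tendsto_padicValNat_factorial_atTop)⟩
end

section
/- Let p be a prime, α ≥ 1, and let (f_λ)_{λ≥1}, (g_λ)_{λ≥0} be integer sequences with g_0 = 1 satisfying Σ_{μ=0}^{λ−1} g_μ f_{λ−μ} = m·λ·g_λ for all λ ≥ 1, where p ∤ m. If there exists λ_0 such that p^α | g_λ for all λ ≥ λ_0, then for all λ ≥ 0: f_{λ+λ_0} ≡ −(g_1 f_{λ+λ_0−1} + g_2 f_{λ+λ_0−2} + ... + g_{λ_0−1} f_{λ+1}) (mod p^α). Consequently the sequence (f_λ mod p^α) satisfies a homogeneous linear recurrence over ℤ/p^αℤ and is ultimately periodic modulo p^α. -/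
theorem stmt_13 (p : ℕ) (hp : p.Prime) (α : ℕ) (hα : 1 ≤ α)
    (m : ℕ) (hm : 0 < m) (hpm : ¬ p ∣ m) (f g : ℕ → ℤ) (hg0 : g 0 = 1)
    (hconv : ∀ lam ≥ 1, ∑ μ ∈ Finset.range lam, g μ * f (lam - μ) = (m : ℤ) * lam * g lam)
    (lam₀ : ℕ) (hdiv : ∀ lam ≥ lam₀, ((p : ℤ) ^ α) ∣ g lam) :
    (∀ lam : ℕ, ((p : ℤ) ^ α) ∣
        (f (lam + lam₀) + ∑ μ ∈ Finset.Ico 1 lam₀, g μ * f (lam + lam₀ - μ))) ∧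
      ∃ ω > 0, ∃ n₀, ∀ n ≥ n₀, ((f (n + ω) : ZMod (p ^ α)) = (f n : ZMod (p ^ α))) := by
  have hp2 : (2 : ℤ) ≤ (p : ℤ) := by exact_mod_cast hp.two_le
  have hlam₀ : 1 ≤ lam₀ := by
    by_contra h
    push_neg at h
    interval_cases lam₀
    have hdvd := hdiv 0 le_rfl
    rw [hg0] at hdvd
    have h1 : (p : ℤ) ^ α ≤ 1 := Int.le_of_dvd one_pos hdvd
    have h2 : (p : ℤ) ≤ (p : ℤ) ^ α := by
      calc (p : ℤ) = (p : ℤ) ^ 1 := (pow_one _).symm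
        _ ≤ (p : ℤ) ^ α := pow_le_pow_right₀ (by linarith) hα
    linarith
  have part1 : ∀ lam : ℕ, ((p : ℤ) ^ α) ∣
      (f (lam + lam₀) + ∑ μ ∈ Finset.Ico 1 lam₀, g μ * f (lam + lam₀ - μ)) := by
    intro lam
    set L := lam + lam₀ with hL
    have hL1 : 1 ≤ L := by omega
    have hc := hconv L hL1
    have hsplit : ∑ μ ∈ Finset.range L, g μ * f (L - μ)
        = f L + (∑ μ ∈ Finset.Ico 1 lam₀, g μ * f (L - μ))
          + ∑ μ ∈ Finset.Ico lam₀ L, g μ * f (L - μ) := by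
      rw [Finset.range_eq_Ico]
      rw [← Finset.sum_Ico_consecutive _ (Nat.zero_le 1) (by omega : 1 ≤ L)]
      rw [← Finset.sum_Ico_consecutive _ (by omega : 1 ≤ lam₀) (by omega : lam₀ ≤ L)]
      have h01 : ∑ μ ∈ Finset.Ico 0 1, g μ * f (L - μ) = f L := by
        simp [hg0]
      rw [h01]; ring
    have key : f L + (∑ μ ∈ Finset.Ico 1 lam₀, g μ * f (L - μ))
        = (m : ℤ) * L * g L - ∑ μ ∈ Finset.Ico lam₀ L, g μ * f (L - μ) := by
      rw [← hc, hsplit]; ring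
    rw [key]
    apply dvd_sub
    · exact (hdiv L (by omega)).mul_left _
    · exact Finset.dvd_sum fun μ hμ =>
        (hdiv μ (Finset.mem_Ico.mp hμ).1).mul_right _
  refine ⟨part1, ?_⟩
  haveI : NeZero (p ^ α) := ⟨pow_ne_zero _ hp.ne_zero⟩
  have hrec : ∀ n, lam₀ ≤ n → ((f n : ZMod (p ^ α)) =
      -∑ μ ∈ Finset.Ico 1 lam₀, (g μ : ZMod (p ^ α)) * (f (n - μ) : ZMod (p ^ α))) := by
    intro n hn
    have h1 := part1 (n - lam₀)
    have hnn : n - lam₀ + lam₀ = n := by omega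
    rw [hnn] at h1
    have h2 : ((f n + ∑ μ ∈ Finset.Ico 1 lam₀, g μ * f (n - μ) : ℤ) : ZMod (p ^ α)) = 0 := by
      rw [ZMod.intCast_zmod_eq_zero_iff_dvd]
      exact_mod_cast h1
    push_cast at h2
    exact eq_neg_of_add_eq_zero_left h2
  set S : ℕ → (Fin lam₀ → ZMod (p ^ α)) := fun n i => ((f (n + i) : ZMod (p ^ α))) with hS
  have main : ∀ a b : ℕ, a < b → S a = S b →
      ∃ ω > 0, ∃ n₀, ∀ n ≥ n₀, ((f (n + ω) : ZMod (p ^ α)) = (f n : ZMod (p ^ α))) := by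
    intro a b hlt hSab
    refine ⟨b - a, by omega, a, ?_⟩
    have claim : ∀ n, (f (a + n) : ZMod (p ^ α)) = (f (b + n) : ZMod (p ^ α)) := by
      intro n
      induction n using Nat.strong_induction_on with
      | _ n ih =>
        rcases lt_or_ge n lam₀ with h | h
        · have := congrFun hSab ⟨n, h⟩
          simpa [S] using this
        · rw [hrec (a + n) (by omega), hrec (b + n) (by omega)]
          congr 1
          apply Finset.sum_congr rfl
          intro μ hμ
          obtain ⟨hμ1, hμ2⟩ := Finset.mem_Ico.mp hμ
          have e1 : a + n - μ = a + (n - μ) := by omega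
          have e2 : b + n - μ = b + (n - μ) := by omega
          rw [e1, e2, ih (n - μ) (by omega)]
    intro n hn
    have h1 := claim (n - a)
    have e1 : a + (n - a) = n := by omega
    have e2 : b + (n - a) = n + (b - a) := by omega
    rw [e1, e2] at h1
    exact h1.symm
  obtain ⟨a, b, hne, hab⟩ := Finite.exists_ne_map_eq_of_infinite S
  rcases hne.lt_or_gt with h | h
  · exact main a b h hab
  · exact main b a h hab.symm
end

section
/- Let p be a prime, and let F(z) ∈ ℤ[[z]] be a power series satisfying F(z) ≡ z^μ_p · F(z)^μ_p · (z^{p−1} F(z)^{p−1} − 1)^M (mod p) coefficientwise, where μ_p ≥ 1 and M ≥ 0 are integers. Then F(z) ≡ 0 (mod p), i.e., every coefficient of F is divisible by p. -/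
/-! Reduced modulo `p`, the congruence reads `f = X ^ μ * f ^ μ * g` in `(ZMod p)⟦X⟧`. As `μ ≥ 1`
this is `f = f * h` with `h` of constant coefficient `0`, and `1 - h` is a unit, so `f = 0`. -/

open PowerSeries

namespace PowerSeries

variable {R : Type*} [CommRing R]

theorem eq_zero_of_eq_mul_of_constantCoeff_eq_zero {f h : R⟦X⟧} (hh : constantCoeff h = 0)
    (hf : f = f * h) : f = 0 := by
  have hunit : IsUnit (1 - h) := by
    rw [isUnit_iff_constantCoeff, map_sub, map_one, hh, sub_zero]
    exact isUnit_one
  refine hunit.mul_left_eq_zero.mp ?_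
  rw [mul_sub, mul_one, ← hf, sub_self]

theorem eq_zero_of_eq_X_pow_mul_pow_mul {f g : R⟦X⟧} {μ : ℕ} (hμ : μ ≠ 0)
    (hf : f = X ^ μ * f ^ μ * g) : f = 0 := by
  refine eq_zero_of_eq_mul_of_constantCoeff_eq_zero (h := X ^ μ * f ^ (μ - 1) * g) ?_ ?_
  · rw [map_mul, map_mul, map_pow, constantCoeff_X, zero_pow hμ, zero_mul, zero_mul]
  · obtain ⟨k, rfl⟩ := Nat.exists_eq_succ_of_ne_zero hμ
    rw [Nat.succ_sub_one]
    calc f = X ^ (k + 1) * f ^ (k + 1) * g := hf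
      _ = f * (X ^ (k + 1) * f ^ k * g) := by ring

theorem map_intCastRingHom_eq_zero_iff {p : ℕ} {F : ℤ⟦X⟧} :
    map (Int.castRingHom (ZMod p)) F = 0 ↔ ∀ n, (p : ℤ) ∣ coeff n F := by
  simp only [PowerSeries.ext_iff, coeff_map, map_zero, eq_intCast,
    ZMod.intCast_zmod_eq_zero_iff_dvd]

end PowerSeries

theorem stmt_15_general (p : ℕ) (μ M : ℕ) (hμ : 1 ≤ μ)
    (F : PowerSeries ℤ)
    (hF : ∀ n : ℕ, (p : ℤ) ∣ PowerSeries.coeff n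
        (F - PowerSeries.X ^ μ * F ^ μ *
          (PowerSeries.X ^ (p - 1) * F ^ (p - 1) - 1) ^ M)) :
    ∀ n : ℕ, (p : ℤ) ∣ PowerSeries.coeff n F := by
  rw [← map_intCastRingHom_eq_zero_iff] at hF ⊢
  rw [map_sub, sub_eq_zero] at hF
  simp only [map_mul, map_pow, map_X] at hF
  exact eq_zero_of_eq_X_pow_mul_pow_mul (by omega) hF

theorem stmt_15 (p : ℕ) (hp : p.Prime) (μ M : ℕ) (hμ : 1 ≤ μ)
    (F : PowerSeries ℤ)
    (hF : ∀ n : ℕ, (p : ℤ) ∣ PowerSeries.coeff n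
        (F - PowerSeries.X ^ μ * F ^ μ *
          (PowerSeries.X ^ (p - 1) * F ^ (p - 1) - 1) ^ M)) :
    ∀ n : ℕ, (p : ℤ) ∣ PowerSeries.coeff n F :=
  stmt_15_general p μ M hμ F hF
end
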